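/- arXiv:dg-ga/9502008 — 3 statements merged into one kernel-verified Lean document; each statement's English description precedes it below -/
import Mathlib

section
/- For every integer l ≥ 1, H_l coincides with the ℝ-linear span of the set of Poisson brackets { {h, p} : h ∈ H₁, p ∈ H_l }; briefly, H_l = {H₁, H_l}. -/
open MvPolynomial MeasureTheory

noncomputable section

attribute [local instance] Classical.propDecidable

/-- The Poisson bracket on `ℝ[X₀,X₁,X₂]` associated to the sphere:
`{f,g} = Σ εᵢⱼₖ Xᵢ ∂f/∂Xⱼ ∂g/∂Xₖ` (indices `0,1,2` play the role of `1,2,3`). -/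
def pb (f g : MvPolynomial (Fin 3) ℝ) : MvPolynomial (Fin 3) ℝ :=
  X 0 * (pderiv 1 f * pderiv 2 g - pderiv 2 f * pderiv 1 g) +
  X 1 * (pderiv 2 f * pderiv 0 g - pderiv 0 f * pderiv 2 g) +
  X 2 * (pderiv 0 f * pderiv 1 g - pderiv 1 f * pderiv 0 g)

/-- The ideal generated by `X₀² + X₁² + X₂² - s²`. -/
def sphereIdeal (s : ℝ) : Ideal (MvPolynomial (Fin 3) ℝ) :=
  Ideal.span {X 0 ^ 2 + X 1 ^ 2 + X 2 ^ 2 - C (s ^ 2)}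

/-- The Poisson algebra `P` of polynomial functions on the sphere of radius `s`. -/
abbrev SpherePoly (s : ℝ) := MvPolynomial (Fin 3) ℝ ⧸ sphereIdeal s

/-- The quotient map `ℝ[X₀,X₁,X₂] → P`. -/
def toSphere (s : ℝ) : MvPolynomial (Fin 3) ℝ →+* SpherePoly s :=
  Ideal.Quotient.mk (sphereIdeal s)

/-- The components `S₁, S₂, S₃` of the spin vector (indexed by `Fin 3`). -/
def S (s : ℝ) (i : Fin 3) : SpherePoly s := toSphere s (X i)

/-- A choice of polynomial representative of an element of `P`. -/
def rep (s : ℝ) (p : SpherePoly s) : MvPolynomial (Fin 3) ℝ :=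
  (Ideal.Quotient.mk_surjective (I := sphereIdeal s) p).choose

/-- The Poisson bracket descended to `P`.  (It is independent of the choice of
representatives, since the bracket of any polynomial with the generator
`X₀² + X₁² + X₂² - s²` vanishes identically.) -/
def pbS (s : ℝ) (p q : SpherePoly s) : SpherePoly s :=
  toSphere s (pb (rep s p) (rep s q))

/-- The Laplacian on `ℝ[X₀,X₁,X₂]` as a linear map. -/
def laplacian : MvPolynomial (Fin 3) ℝ →ₗ[ℝ] MvPolynomial (Fin 3) ℝ :=
  (pderiv 0).toLinearMap ∘ₗ (pderiv 0).toLinearMap +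
  (pderiv 1).toLinearMap ∘ₗ (pderiv 1).toLinearMap +
  (pderiv 2).toLinearMap ∘ₗ (pderiv 2).toLinearMap

/-- Homogeneous harmonic polynomials of degree `l`. -/
def harmonicHomog (l : ℕ) : Submodule ℝ (MvPolynomial (Fin 3) ℝ) :=
  homogeneousSubmodule (Fin 3) ℝ l ⊓ LinearMap.ker laplacian

/-- `H_l`, the image in `P` of the homogeneous harmonic polynomials of degree `l`. -/
def Hsph (s : ℝ) (l : ℕ) : Submodule ℝ (SpherePoly s) :=
  (harmonicHomog l).map (Ideal.Quotient.mkₐ ℝ (sphereIdeal s)).toLinearMap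

/-- `O`, the odd polynomials: the sum of the `H_l` over odd `l`. -/
def Osph (s : ℝ) : Submodule ℝ (SpherePoly s) :=
  ⨆ (l : ℕ) (_ : Odd l), Hsph s l

/-- `Õ = ℝ·1 ⊕ O`. -/
def Otilde (s : ℝ) : Submodule ℝ (SpherePoly s) :=
  Submodule.span ℝ ({1} : Set (SpherePoly s)) ⊔ Osph s

theorem S_mem_H1 (s : ℝ) (i : Fin 3) : S s i ∈ Hsph s 1 := by
  refine ⟨X i, ⟨isHomogeneous_X _ _, ?_⟩, rfl⟩
  fin_cases i <;> simp [laplacian, pderiv_X]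

theorem S_mem_Otilde (s : ℝ) (i : Fin 3) : S s i ∈ Otilde s :=
  Submodule.mem_sup_right
    ((le_iSup₂ (f := fun (l : ℕ) (_ : Odd l) => Hsph s l) 1 odd_one) (S_mem_H1 s i))

theorem one_mem_Otilde (s : ℝ) : (1 : SpherePoly s) ∈ Otilde s :=
  Submodule.mem_sup_left (Submodule.mem_span_singleton_self 1)

-- ==== auxiliary lemmas ====

lemma laplacian_apply (f : MvPolynomial (Fin 3) ℝ) :
    laplacian f = pderiv 0 (pderiv 0 f) + pderiv 1 (pderiv 1 f) + pderiv 2 (pderiv 2 f) := rfl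

lemma pb_gen_left (s : ℝ) (c : MvPolynomial (Fin 3) ℝ) :
    pb (X 0 ^ 2 + X 1 ^ 2 + X 2 ^ 2 - C (s ^ 2)) c = 0 := by
  simp only [pb, pow_two, map_sub, map_add, map_mul, pderiv_mul, pderiv_C, pderiv_X_self,
    pderiv_X_of_ne (show (0:Fin 3) ≠ 1 by decide), pderiv_X_of_ne (show (0:Fin 3) ≠ 2 by decide),
    pderiv_X_of_ne (show (1:Fin 3) ≠ 0 by decide), pderiv_X_of_ne (show (1:Fin 3) ≠ 2 by decide),
    pderiv_X_of_ne (show (2:Fin 3) ≠ 0 by decide), pderiv_X_of_ne (show (2:Fin 3) ≠ 1 by decide)]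
  ring

lemma pb_anti (f g : MvPolynomial (Fin 3) ℝ) : pb f g = -pb g f := by unfold pb; ring

lemma pb_mul_left (a b c : MvPolynomial (Fin 3) ℝ) :
    pb (a * b) c = a * pb b c + b * pb a c := by
  simp only [pb, pderiv_mul]; ring

lemma pb_mem_left (s : ℝ) {m : MvPolynomial (Fin 3) ℝ} (hm : m ∈ sphereIdeal s)
    (c : MvPolynomial (Fin 3) ℝ) : pb m c ∈ sphereIdeal s := by
  rw [sphereIdeal, Ideal.mem_span_singleton] at hm ⊢
  obtain ⟨b, rfl⟩ := hm
  refine ⟨pb b c, ?_⟩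
  rw [pb_mul_left, pb_gen_left]
  ring

lemma pb_mem_right (s : ℝ) (c : MvPolynomial (Fin 3) ℝ) {m : MvPolynomial (Fin 3) ℝ}
    (hm : m ∈ sphereIdeal s) : pb c m ∈ sphereIdeal s := by
  have := pb_mem_left s hm c
  rw [pb_anti c m]
  exact neg_mem this

lemma pbS_mk (s : ℝ) (f g : MvPolynomial (Fin 3) ℝ) :
    pbS s (toSphere s f) (toSphere s g) = toSphere s (pb f g) := by
  rw [pbS]
  have hf : toSphere s (rep s (toSphere s f)) = toSphere s f :=
    (Ideal.Quotient.mk_surjective (I := sphereIdeal s) (toSphere s f)).choose_spec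
  have hg : toSphere s (rep s (toSphere s g)) = toSphere s g :=
    (Ideal.Quotient.mk_surjective (I := sphereIdeal s) (toSphere s g)).choose_spec
  have h1 : rep s (toSphere s f) - f ∈ sphereIdeal s := Ideal.Quotient.eq.mp hf
  have h2 : rep s (toSphere s g) - g ∈ sphereIdeal s := Ideal.Quotient.eq.mp hg
  apply Ideal.Quotient.eq.mpr
  have key : pb (rep s (toSphere s f)) (rep s (toSphere s g)) - pb f g =
      pb (rep s (toSphere s f) - f) (rep s (toSphere s g)) + pb f (rep s (toSphere s g) - g) := by
    simp only [pb, map_sub]; ring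
  rw [key]
  exact Ideal.add_mem _ (pb_mem_left s h1 _) (pb_mem_right s f h2)
lemma deg3 (d : Fin 3 →₀ ℕ) : d.degree = d 0 + d 1 + d 2 := by
  have h : d.degree = ∑ i : Fin 3, d i := by
    rw [Finsupp.degree]
    exact Finset.sum_subset (Finset.subset_univ _)
      (fun i _ hi => by simpa [Finsupp.notMem_support_iff] using hi)
  rw [h, Fin.sum_univ_three]

lemma pderiv_comm' (i j : Fin 3) (f : MvPolynomial (Fin 3) ℝ) :
    pderiv i (pderiv j f) = pderiv j (pderiv i f) := by
  induction f using MvPolynomial.induction_on with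
  | C a => simp
  | add p q hp hq => simp [hp, hq]
  | mul_X p n hp =>
      simp only [pderiv_mul, pderiv_X, map_add, map_mul, hp, Pi.single_apply]
      split_ifs <;> simp [hp] <;> ring

lemma X_mul_pderiv_monomial (i : Fin 3) (s : Fin 3 →₀ ℕ) (a : ℝ) :
    X i * pderiv i (monomial s a) = monomial s (a * s i) := by
  rw [pderiv_monomial]
  by_cases h : s i = 0
  · simp [h]
  · have hi : 1 ≤ s i := Nat.one_le_iff_ne_zero.mpr h
    rw [← pow_one (X i), ← monomial_single_add]
    have hsub : (fun₀ | i => 1) + (s - fun₀ | i => 1) = s := by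
      apply Finsupp.ext; intro j
      rcases eq_or_ne j i with rfl | hj
      · have h1 : ((fun₀ | j => 1) : Fin 3 →₀ ℕ) j = 1 := Finsupp.single_eq_same
        simp only [Finsupp.add_apply, Finsupp.tsub_apply, h1]
        omega
      · simp [Finsupp.single_apply, Ne.symm hj]
    rw [hsub]

lemma euler3 {n : ℕ} {f : MvPolynomial (Fin 3) ℝ} (hf : f.IsHomogeneous n) :
    X 0 * pderiv 0 f + X 1 * pderiv 1 f + X 2 * pderiv 2 f = (n : ℝ) • f := by
  conv_lhs => rw [f.as_sum]
  conv_rhs => rw [f.as_sum]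
  simp only [map_sum, Finset.mul_sum, ← Finset.sum_add_distrib, Finset.smul_sum]
  refine Finset.sum_congr rfl fun s hs => ?_
  have hd : s.degree = n := by
    by_contra hne; exact (mem_support_iff.mp hs) (hf.coeff_eq_zero hne)
  rw [X_mul_pderiv_monomial, X_mul_pderiv_monomial, X_mul_pderiv_monomial,
    ← map_add, ← map_add, smul_monomial]
  congr 1
  rw [deg3] at hd
  have h2 : ((s 0 : ℝ)) + s 1 + s 2 = (n : ℝ) := by exact_mod_cast congrArg Nat.cast hd
  rw [smul_eq_mul]
  linear_combination coeff s f * h2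

lemma isHomogeneous_pderiv {n : ℕ} {f : MvPolynomial (Fin 3) ℝ} (hf : f.IsHomogeneous n)
    (i : Fin 3) : (pderiv i f).IsHomogeneous (n - 1) := by
  rw [f.as_sum, map_sum]
  apply IsHomogeneous.sum
  intro s hs
  have hd : s.degree = n := by
    by_contra hne; exact (mem_support_iff.mp hs) (hf.coeff_eq_zero hne)
  rw [pderiv_monomial]
  by_cases h : s i = 0
  · simp [h]
    exact isHomogeneous_zero _ _ _
  · apply isHomogeneous_monomial
    have hi : 1 ≤ s i := Nat.one_le_iff_ne_zero.mpr h
    rw [deg3] at hd ⊢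
    fin_cases i <;>
      simp [Finsupp.tsub_apply, Finsupp.single_apply] at hi ⊢ <;> omega

lemma lap_pderiv (k : Fin 3) (q : MvPolynomial (Fin 3) ℝ) :
    laplacian (pderiv k q) = pderiv k (laplacian q) := by
  simp only [laplacian_apply, map_add]
  congr 1
  · congr 1
    · rw [pderiv_comm' 0 k q, pderiv_comm' 0 k (pderiv 0 q)]
    · rw [pderiv_comm' 1 k q, pderiv_comm' 1 k (pderiv 1 q)]
  · rw [pderiv_comm' 2 k q, pderiv_comm' 2 k (pderiv 2 q)]

lemma pderiv_homog0 {q : MvPolynomial (Fin 3) ℝ} (hq : q.IsHomogeneous 0) (m : Fin 3) :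
    pderiv m q = 0 := by
  rcases eq_or_ne q 0 with rfl | hq0
  · simp
  apply pderiv_eq_zero_of_notMem_vars
  intro hm
  obtain ⟨d, hd, hmd⟩ := (mem_vars _).mp hm
  have h0 := (totalDegree_eq_zero_iff (Fin 3) q).mp (hq.totalDegree hq0) d hd m
  exact (Finsupp.mem_support_iff.mp hmd) h0

lemma lap_term0 (u v : MvPolynomial (Fin 3) ℝ) (hu : ∀ m, pderiv m u = 0) :
    laplacian (X 0 * (u * v)) = u * (X 0 * laplacian v + 2 * pderiv 0 v) := by
  simp only [laplacian_apply, pderiv_mul, hu, pderiv_X_self,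
    pderiv_X_of_ne (show (0:Fin 3) ≠ 1 by decide), pderiv_X_of_ne (show (0:Fin 3) ≠ 2 by decide),
    map_add, map_mul, map_zero, pderiv_C, pderiv_one]
  ring

lemma lap_term1 (u v : MvPolynomial (Fin 3) ℝ) (hu : ∀ m, pderiv m u = 0) :
    laplacian (X 1 * (u * v)) = u * (X 1 * laplacian v + 2 * pderiv 1 v) := by
  simp only [laplacian_apply, pderiv_mul, hu, pderiv_X_self,
    pderiv_X_of_ne (show (1:Fin 3) ≠ 0 by decide), pderiv_X_of_ne (show (1:Fin 3) ≠ 2 by decide),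
    map_add, map_mul, map_zero, pderiv_C, pderiv_one]
  ring

lemma lap_term2 (u v : MvPolynomial (Fin 3) ℝ) (hu : ∀ m, pderiv m u = 0) :
    laplacian (X 2 * (u * v)) = u * (X 2 * laplacian v + 2 * pderiv 2 v) := by
  simp only [laplacian_apply, pderiv_mul, hu, pderiv_X_self,
    pderiv_X_of_ne (show (2:Fin 3) ≠ 0 by decide), pderiv_X_of_ne (show (2:Fin 3) ≠ 1 by decide),
    map_add, map_mul, map_zero, pderiv_C, pderiv_one]
  ring

lemma pb_X0 (q : MvPolynomial (Fin 3) ℝ) : pb (X 0) q = X 2 * pderiv 1 q - X 1 * pderiv 2 q := by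
  simp [pb, pderiv_X_of_ne (show (0:Fin 3) ≠ 1 by decide),
    pderiv_X_of_ne (show (0:Fin 3) ≠ 2 by decide)]
  ring

lemma pb_X1 (q : MvPolynomial (Fin 3) ℝ) : pb (X 1) q = X 0 * pderiv 2 q - X 2 * pderiv 0 q := by
  simp [pb, pderiv_X_of_ne (show (1:Fin 3) ≠ 0 by decide),
    pderiv_X_of_ne (show (1:Fin 3) ≠ 2 by decide)]
  ring

lemma pb_X2 (q : MvPolynomial (Fin 3) ℝ) : pb (X 2) q = X 1 * pderiv 0 q - X 0 * pderiv 1 q := by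
  simp [pb, pderiv_X_of_ne (show (2:Fin 3) ≠ 0 by decide),
    pderiv_X_of_ne (show (2:Fin 3) ≠ 1 by decide)]
  ring

lemma pb_expand (h p : MvPolynomial (Fin 3) ℝ) :
    pb h p = X 0 * (pderiv 1 h * pderiv 2 p) - X 0 * (pderiv 2 h * pderiv 1 p)
        + (X 1 * (pderiv 2 h * pderiv 0 p) - X 1 * (pderiv 0 h * pderiv 2 p))
        + (X 2 * (pderiv 0 h * pderiv 1 p) - X 2 * (pderiv 1 h * pderiv 0 p)) := by
  unfold pb; ring

lemma pb_mem_harmonic {l : ℕ} (hl : 1 ≤ l) {h p : MvPolynomial (Fin 3) ℝ}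
    (hh : h ∈ harmonicHomog 1) (hp : p ∈ harmonicHomog l) : pb h p ∈ harmonicHomog l := by
  rw [harmonicHomog, Submodule.mem_inf] at hh hp ⊢
  obtain ⟨hh1, hh2⟩ := hh
  obtain ⟨hp1, hp2⟩ := hp
  rw [mem_homogeneousSubmodule] at hh1 hp1
  have hu : ∀ j m, pderiv m (pderiv j h) = 0 := fun j m =>
    pderiv_homog0 (by simpa using isHomogeneous_pderiv hh1 j) m
  constructor
  · rw [mem_homogeneousSubmodule, pb_expand]
    have hterm : ∀ i j k : Fin 3, (X i * (pderiv j h * pderiv k p)).IsHomogeneous l := by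
      intro i j k
      have h1 : (pderiv j h).IsHomogeneous 0 := by simpa using isHomogeneous_pderiv hh1 j
      have h2 := isHomogeneous_pderiv hp1 k
      have h3 := (isHomogeneous_X ℝ i).mul (h1.mul h2)
      have h4 : 1 + (0 + (l - 1)) = l := by omega
      rwa [h4] at h3
    exact (((hterm _ _ _).sub (hterm _ _ _)).add
      ((hterm _ _ _).sub (hterm _ _ _))).add ((hterm _ _ _).sub (hterm _ _ _))
  · rw [LinearMap.mem_ker]
    have hΔp : laplacian p = 0 := LinearMap.mem_ker.mp hp2
    have hld : ∀ k, laplacian (pderiv k p) = 0 := fun k => by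
      rw [lap_pderiv, hΔp, map_zero]
    rw [pb_expand, map_add, map_add, map_sub, map_sub, map_sub,
      lap_term0 _ _ (hu 1), lap_term0 _ _ (hu 2), lap_term1 _ _ (hu 2),
      lap_term1 _ _ (hu 0), lap_term2 _ _ (hu 0), lap_term2 _ _ (hu 1)]
    rw [hld 0, hld 1, hld 2]
    linear_combination (2:MvPolynomial (Fin 3) ℝ) * pderiv 1 h * (pderiv_comm' 0 2 p) +
      2 * pderiv 2 h * (pderiv_comm' 1 0 p) + 2 * pderiv 0 h * (pderiv_comm' 2 1 p)

lemma casimir {l : ℕ} (hl : 1 ≤ l) {p : MvPolynomial (Fin 3) ℝ} (hp : p ∈ harmonicHomog l) :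
    (C (l : ℝ) * (C (l : ℝ) + 1)) * p
      + (pb (X 0) (pb (X 0) p) + pb (X 1) (pb (X 1) p) + pb (X 2) (pb (X 2) p)) = 0 := by
  rw [harmonicHomog, Submodule.mem_inf] at hp
  obtain ⟨hp1, hp2⟩ := hp
  rw [mem_homogeneousSubmodule] at hp1
  have H : pderiv 0 (pderiv 0 p) + pderiv 1 (pderiv 1 p) + pderiv 2 (pderiv 2 p) = 0 := by
    have := LinearMap.mem_ker.mp hp2
    rwa [laplacian_apply] at this
  have hc : ((l - 1 : ℕ) : ℝ) = (l : ℝ) - 1 := by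
    rw [Nat.cast_sub hl]; norm_num
  have EP := euler3 hp1
  have E0 := euler3 (isHomogeneous_pderiv hp1 0)
  have E1 := euler3 (isHomogeneous_pderiv hp1 1)
  have E2 := euler3 (isHomogeneous_pderiv hp1 2)
  rw [smul_eq_C_mul] at EP E0 E1 E2
  rw [hc] at E0 E1 E2
  have hC1 : (C ((l:ℝ) - 1) : MvPolynomial (Fin 3) ℝ) = C (l:ℝ) - 1 := by
    rw [map_sub, map_one]
  rw [hC1] at E0 E1 E2
  rw [pb_X0, pb_X0, pb_X1, pb_X1, pb_X2, pb_X2]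
  simp only [map_sub, pderiv_mul, pderiv_X_self,
    pderiv_X_of_ne (show (0:Fin 3) ≠ 1 by decide), pderiv_X_of_ne (show (0:Fin 3) ≠ 2 by decide),
    pderiv_X_of_ne (show (1:Fin 3) ≠ 0 by decide), pderiv_X_of_ne (show (1:Fin 3) ≠ 2 by decide),
    pderiv_X_of_ne (show (2:Fin 3) ≠ 0 by decide), pderiv_X_of_ne (show (2:Fin 3) ≠ 1 by decide)]
  linear_combination (X 0 ^ 2 + X 1 ^ 2 + X 2 ^ 2) * H - X 0 * E0 - X 1 * E1 - X 2 * E2 -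
    (C ((l : ℝ)) + 1) * EP

lemma X_mem_harmonic1 (i : Fin 3) : X i ∈ harmonicHomog 1 := by
  rw [harmonicHomog, Submodule.mem_inf]
  constructor
  · rw [mem_homogeneousSubmodule]; exact isHomogeneous_X _ _
  · rw [LinearMap.mem_ker]; fin_cases i <;> simp [laplacian, pderiv_X]

lemma mkalg_eq_toSphere (s : ℝ) (f : MvPolynomial (Fin 3) ℝ) :
    (Ideal.Quotient.mkₐ ℝ (sphereIdeal s)).toLinearMap f = toSphere s f := rfl


/-- Lemma 2.10: for `l ≥ 1`, `H_l = {H₁, H_l}`, i.e. `H_l` is the ℝ-linear span of the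
Poisson brackets `{h, p}` with `h ∈ H₁` and `p ∈ H_l`. -/
theorem Hl_eq_span_brackets (s : ℝ) (hs : 0 < s) (l : ℕ) (hl : 1 ≤ l) :
    Hsph s l = Submodule.span ℝ
      {x : SpherePoly s | ∃ h ∈ Hsph s 1, ∃ p ∈ Hsph s l, x = pbS s h p} := by
  apply le_antisymm
  · rintro x ⟨p₀, hp₀, rfl⟩
    set L : ℝ := (l : ℝ) with hL
    have hLpos : (1:ℝ) ≤ L := by rw [hL]; exact_mod_cast hl
    have ha : L * (L + 1) ≠ 0 := by nlinarith
    have key := casimir hl hp₀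
    have hCa : (C (L * (L + 1)) : MvPolynomial (Fin 3) ℝ) = C L * (C L + 1) := by
      rw [map_mul, map_add, map_one]
    have h1 : (L * (L + 1)) • p₀ =
        -(pb (X 0) (pb (X 0) p₀) + pb (X 1) (pb (X 1) p₀) + pb (X 2) (pb (X 2) p₀)) := by
      rw [smul_eq_C_mul, hCa]
      linear_combination key
    have hp₀eq : p₀ = (-(L * (L + 1))⁻¹) •
        (pb (X 0) (pb (X 0) p₀) + pb (X 1) (pb (X 1) p₀) + pb (X 2) (pb (X 2) p₀)) := by
      have h2 : p₀ = (L * (L + 1))⁻¹ • ((L * (L + 1)) • p₀) := by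
        rw [smul_smul, inv_mul_cancel₀ ha, one_smul]
      nth_rewrite 1 [h2]
      rw [h1, smul_neg, ← neg_smul]
    rw [hp₀eq, _root_.map_smul, map_add, map_add]
    refine Submodule.smul_mem _ _ (add_mem (add_mem ?_ ?_) ?_) <;>
      [skip; skip; skip]
    · refine Submodule.subset_span ⟨S s 0, S_mem_H1 s 0, toSphere s (pb (X 0) p₀),
        ⟨pb (X 0) p₀, pb_mem_harmonic hl (X_mem_harmonic1 0) hp₀, rfl⟩, ?_⟩
      rw [mkalg_eq_toSphere, ← pbS_mk]; rfl
    · refine Submodule.subset_span ⟨S s 1, S_mem_H1 s 1, toSphere s (pb (X 1) p₀),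
        ⟨pb (X 1) p₀, pb_mem_harmonic hl (X_mem_harmonic1 1) hp₀, rfl⟩, ?_⟩
      rw [mkalg_eq_toSphere, ← pbS_mk]; rfl
    · refine Submodule.subset_span ⟨S s 2, S_mem_H1 s 2, toSphere s (pb (X 2) p₀),
        ⟨pb (X 2) p₀, pb_mem_harmonic hl (X_mem_harmonic1 2) hp₀, rfl⟩, ?_⟩
      rw [mkalg_eq_toSphere, ← pbS_mk]; rfl
  · rw [Submodule.span_le]
    rintro x ⟨h, hh, p, hp, rfl⟩
    obtain ⟨h₀, hh₀, rfl⟩ := hh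
    obtain ⟨p₀, hp₀, rfl⟩ := hp
    rw [mkalg_eq_toSphere, mkalg_eq_toSphere, pbS_mk]
    exact ⟨pb h₀ p₀, pb_mem_harmonic hl hh₀ hp₀, rfl⟩


end
end

section
/- The surface integral over the sphere of any Poisson bracket vanishes: for all polynomials f, g ∈ ℝ[X₁,X₂,X₃], ∫_{S²_s} {f,g} dσ = 0. -/
open MvPolynomial MeasureTheory

noncomputable section

attribute [local instance] Classical.propDecidable

/-! The bracket `{f,g}` is a sum of three terms `L_{ij} h` with `L_{ij} = X_i ∂_j - X_j ∂_i`, the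
infinitesimal generator of the rotations `R_θ` in the `(i,j)`-plane. Hausdorff measure and the
sphere are rotation invariant, so `∫_S L_{ij} h = ∫_S (L_{ij} h) ∘ R_θ` for every `θ`. Averaging over
`θ ∈ [0, 2π]` and swapping the integrals, the inner integral becomes `h ∘ R_{2π} - h ∘ R_0 = 0`.
Fubini applies because the sphere has finite `μH[2]`-measure, being the image of a compact rectangle
under the `C¹` map of spherical coordinates. -/

open Real

namespace MvPolynomial

variable {σ R : Type*}

theorem pderiv_pderiv_comm [CommSemiring R] (i j : σ) (p : MvPolynomial σ R) :
    pderiv i (pderiv j p) = pderiv j (pderiv i p) := by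
  induction p using MvPolynomial.induction_on with
  | C a => simp
  | add p q hp hq => simp [hp, hq]
  | mul_X p k hp =>
    simp only [pderiv_mul, map_add, hp, pderiv_X, Pi.single_apply]
    split_ifs <;> simp only [Derivation.map_one_eq_zero, map_zero, mul_one, mul_zero, add_zero]
    ring

def angularDerivation [CommRing R] (i j : σ) : Derivation R (MvPolynomial σ R) (MvPolynomial σ R) :=
  (X i : MvPolynomial σ R) • pderiv j - (X j : MvPolynomial σ R) • pderiv i

theorem angularDerivation_apply [CommRing R] (i j : σ) (p : MvPolynomial σ R) :
    angularDerivation i j p = X i * pderiv j p - X j * pderiv i p := by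
  simp [angularDerivation]

theorem hasDerivAt_eval_of_derivation (D : Derivation ℝ (MvPolynomial σ ℝ) (MvPolynomial σ ℝ))
    {γ : ℝ → σ → ℝ} {θ : ℝ} (hγ : ∀ m, HasDerivAt (fun t => γ t m) (eval (γ θ) (D (X m))) θ)
    (q : MvPolynomial σ ℝ) :
    HasDerivAt (fun t => eval (γ t) q) (eval (γ θ) (D q)) θ := by
  induction q using MvPolynomial.induction_on with
  | C a => simpa [MvPolynomial.derivation_C] using hasDerivAt_const θ a
  | add p q hp hq => simp only [map_add]; exact hp.add hq
  | mul_X p m hp =>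
    simp only [map_mul, eval_X, Derivation.leibniz, smul_eq_mul]
    refine (hp.fun_mul (hγ m)).congr_deriv ?_
    simp only [map_add, map_mul, eval_X]
    ring

end MvPolynomial

theorem pb_eq_sum_angularDerivation (f g : MvPolynomial (Fin 3) ℝ) :
    pb f g = angularDerivation 1 2 (f * pderiv 0 g) + angularDerivation 2 0 (f * pderiv 1 g) +
      angularDerivation 0 1 (f * pderiv 2 g) := by
  simp only [pb, angularDerivation_apply, Derivation.leibniz, smul_eq_mul,
    pderiv_pderiv_comm 2 0 g, pderiv_pderiv_comm 1 0 g, pderiv_pderiv_comm 2 1 g]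
  ring

section PlaneRotation

variable {ι : Type*} [Fintype ι] [DecidableEq ι] {i j : ι}

theorem sum_sq_planeRotation (hij : i ≠ j) (θ : ℝ) (x : ι → ℝ) :
    ∑ m, (if m = i then cos θ * x i - sin θ * x j
      else if m = j then sin θ * x i + cos θ * x j else x m) ^ 2 = ∑ m, x m ^ 2 := by
  set a := (cos θ * x i - sin θ * x j) ^ 2 - x i ^ 2
  have hm : ∀ m, (if m = i then cos θ * x i - sin θ * x j
      else if m = j then sin θ * x i + cos θ * x j else x m) ^ 2 =
      x m ^ 2 + (if m = i then a else 0) - (if m = j then a else 0) := by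
    intro m
    split_ifs with hi hj hj
    · exact absurd (hi.symm.trans hj) hij
    · rw [hi]; ring
    · rw [hj]; linear_combination (x i ^ 2 + x j ^ 2) * (sin_sq_add_cos_sq θ)
    · ring
  simp only [hm, Finset.sum_sub_distrib, Finset.sum_add_distrib, Finset.sum_ite_eq',
    Finset.mem_univ, if_true, add_sub_cancel_right]

def planeRotation (hij : i ≠ j) (θ : ℝ) : EuclideanSpace ℝ ι ≃ₗᵢ[ℝ] EuclideanSpace ℝ ι :=
  LinearIsometry.toLinearIsometryEquiv
    { toFun := fun x => WithLp.toLp 2 fun m =>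
        if m = i then cos θ * x i - sin θ * x j
        else if m = j then sin θ * x i + cos θ * x j else x m
      map_add' x y := by ext m; simp only [PiLp.add_apply]; split_ifs <;> ring
      map_smul' c x := by
        ext m
        simp only [PiLp.smul_apply, smul_eq_mul, RingHom.id_apply]
        split_ifs <;> ring
      norm_map' x := by
        simp only [EuclideanSpace.norm_eq, Real.norm_eq_abs, sq_abs, LinearMap.coe_mk,
          AddHom.coe_mk, sum_sq_planeRotation hij] }
    rfl

theorem planeRotation_apply (hij : i ≠ j) (θ : ℝ) (x : EuclideanSpace ℝ ι) (m : ι) :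
    planeRotation hij θ x m = if m = i then cos θ * x i - sin θ * x j
      else if m = j then sin θ * x i + cos θ * x j else x m := rfl

theorem continuous_planeRotation (hij : i ≠ j) :
    Continuous fun p : ℝ × EuclideanSpace ℝ ι => planeRotation hij p.1 p.2 := by
  refine (PiLp.continuous_toLp 2 _).comp (continuous_pi fun m => ?_)
  split_ifs <;> fun_prop

theorem planeRotation_two_pi (hij : i ≠ j) (x : EuclideanSpace ℝ ι) :
    planeRotation hij (2 * π) x = x := by
  ext m
  simp only [planeRotation_apply, cos_two_pi, sin_two_pi]
  split_ifs <;> simp_all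

theorem planeRotation_zero (hij : i ≠ j) (x : EuclideanSpace ℝ ι) :
    planeRotation hij 0 x = x := by
  ext m
  simp only [planeRotation_apply, cos_zero, sin_zero]
  split_ifs <;> simp_all

theorem hasDerivAt_planeRotation_apply (hij : i ≠ j) (x : EuclideanSpace ℝ ι) (θ : ℝ) (m : ι) :
    HasDerivAt (fun t => planeRotation hij t x m)
      (eval (fun m => planeRotation hij θ x m) (angularDerivation i j (X m))) θ := by
  simp only [planeRotation_apply, angularDerivation_apply, pderiv_X, Pi.single_apply]
  rcases eq_or_ne m i with rfl | hmi
  · simp only [if_true, if_neg hij]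
    refine (((hasDerivAt_cos θ).mul_const _).fun_sub
      ((hasDerivAt_sin θ).mul_const _)).congr_deriv ?_
    simp only [neg_mul, mul_zero, mul_one, zero_sub, map_neg, eval_X, hij.symm, ↓reduceIte,
      neg_add_rev]
    ring
  rcases eq_or_ne m j with rfl | hmj
  · simp only [if_true, if_neg hmi]
    refine (((hasDerivAt_sin θ).mul_const _).fun_add
      ((hasDerivAt_cos θ).mul_const _)).congr_deriv ?_
    simp only [neg_mul, mul_one, mul_zero, sub_zero, eval_X, ↓reduceIte]
    ring
  · simpa [hmi, hmj] using hasDerivAt_const θ (x m)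

end PlaneRotation

section SphereIntegral

open Metric Set Function

theorem setIntegral_sphere_comp_linearIsometryEquiv {E F : Type*} [NormedAddCommGroup E]
    [NormedSpace ℝ E] [MeasurableSpace E] [BorelSpace E] [NormedAddCommGroup F] [NormedSpace ℝ F]
    (e : E ≃ₗᵢ[ℝ] E) (g : E → F) (d r : ℝ) :
    ∫ x in sphere 0 r, g (e x) ∂μH[d] = ∫ x in sphere 0 r, g x ∂μH[d] := by
  have := (e.toIsometryEquiv.measurePreserving_hausdorffMeasure d).setIntegral_preimage_emb
    e.toHomeomorph.measurableEmbedding g (sphere 0 r)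
  rwa [IsometryEquiv.preimage_sphere, LinearIsometryEquiv.coe_symm_toIsometryEquiv, map_zero]
    at this

theorem continuous_eval_ofLp {ι : Type*} (p : MvPolynomial ι ℝ) :
    Continuous fun x : EuclideanSpace ℝ ι => eval (fun m => x m) p :=
  (continuous_eval p).comp (PiLp.continuous_ofLp 2 _)

variable {ι : Type*} [Fintype ι] {i j : ι}

theorem integrableOn_sphere_eval {d r : ℝ} (hS : μH[d] (sphere (0 : EuclideanSpace ℝ ι) r) < ⊤)
    (p : MvPolynomial ι ℝ) :
    IntegrableOn (fun x : EuclideanSpace ℝ ι => eval (fun m => x m) p) (sphere 0 r) μH[d] :=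
  (continuous_eval_ofLp p).continuousOn.integrableOn_of_subset_isCompact (isCompact_sphere 0 r)
    isClosed_sphere.measurableSet subset_rfl hS.ne

theorem intervalIntegral_eval_angularDerivation_planeRotation [DecidableEq ι] (hij : i ≠ j)
    (x : EuclideanSpace ℝ ι) (q : MvPolynomial ι ℝ) :
    ∫ θ in 0..2 * π, eval (fun m => planeRotation hij θ x m) (angularDerivation i j q) = 0 := by
  have hrot :=
    (continuous_planeRotation hij).comp (continuous_id.prodMk (continuous_const (y := x)))
  have hcont := (continuous_eval_ofLp (angularDerivation i j q)).comp hrot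
  rw [intervalIntegral.integral_eq_sub_of_hasDerivAt (fun θ _ => hasDerivAt_eval_of_derivation _
    (hasDerivAt_planeRotation_apply hij x θ) q) (hcont.intervalIntegrable _ _),
    planeRotation_two_pi, planeRotation_zero, sub_self]

theorem setIntegral_sphere_eval_angularDerivation [DecidableEq ι] {d r : ℝ}
    (hS : μH[d] (sphere (0 : EuclideanSpace ℝ ι) r) < ⊤) (hij : i ≠ j) (q : MvPolynomial ι ℝ) :
    ∫ x in sphere (0 : EuclideanSpace ℝ ι) r,
      eval (fun m => x m) (angularDerivation i j q) ∂μH[d] = 0 := by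
  set P := angularDerivation i j q
  set μ : Measure (EuclideanSpace ℝ ι) := μH[d].restrict (sphere 0 r)
  set ν : Measure ℝ := volume.restrict (Ioc 0 (2 * π))
  have : IsFiniteMeasure μ := isFiniteMeasure_restrict.2 hS.ne
  let F : ℝ → EuclideanSpace ℝ ι → ℝ := fun θ x => eval (fun m => planeRotation hij θ x m) P
  obtain ⟨C, hC⟩ := (isCompact_sphere (0 : EuclideanSpace ℝ ι) r).exists_bound_of_continuousOn
    (continuous_eval_ofLp P).continuousOn
  have hF : Integrable (uncurry F) (ν.prod μ) := by
    refine .of_bound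
      ((continuous_eval_ofLp P).comp (continuous_planeRotation hij)).aestronglyMeasurable C ?_
    filter_upwards [Measure.quasiMeasurePreserving_snd.ae
      (ae_restrict_mem isClosed_sphere.measurableSet)] with p hp
    exact hC _ (by simpa [mem_sphere_zero_iff_norm] using hp)
  have hinner_x : ∀ θ, ∫ x, F θ x ∂μ = ∫ x, eval (fun m => x m) P ∂μ := fun θ =>
    setIntegral_sphere_comp_linearIsometryEquiv (planeRotation hij θ)
      (fun y => eval (fun m => y m) P) d r
  have hinner_θ : ∀ x, ∫ θ, F θ x ∂ν = 0 := fun x => by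
    rw [← intervalIntegral.integral_of_le (by positivity)]
    exact intervalIntegral_eval_angularDerivation_planeRotation hij x q
  have hswap := integral_integral_swap hF
  simp only [hinner_x, hinner_θ, integral_const, smul_eq_mul, ν, measureReal_restrict_apply_univ,
    Real.volume_real_Ioc, sub_zero, mul_zero, max_eq_left two_pi_pos.le] at hswap
  exact (mul_eq_zero.1 hswap).resolve_left two_pi_pos.ne'

end SphereIntegral

section SphereMeasure

open Metric Set Module

theorem ContDiff.hausdorffMeasure_image_lt_top {E F : Type*} [NormedAddCommGroup E]
    [NormedSpace ℝ E] [FiniteDimensional ℝ E] [MeasurableSpace E] [BorelSpace E]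
    [NormedAddCommGroup F] [NormedSpace ℝ F] [MeasurableSpace F] [BorelSpace F] {f : E → F}
    (hf : ContDiff ℝ 1 f) {K : Set E} (hK : IsCompact K) : μH[finrank ℝ E] (f '' K) < ⊤ := by
  obtain ⟨C, hC⟩ := hf.locallyLipschitz.locallyLipschitzOn.exists_lipschitzOnWith_of_compact hK
  exact (hC.hausdorffMeasure_image_le (Nat.cast_nonneg _)).trans_lt
    (ENNReal.mul_lt_top (by simp) hK.measure_lt_top)

def sphericalCoords (r : ℝ) (p : ℝ × ℝ) : EuclideanSpace ℝ (Fin 3) :=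
  r • !₂[cos p.1 * sin p.2, sin p.1 * sin p.2, cos p.2]

theorem contDiff_sphericalCoords (r : ℝ) : ContDiff ℝ 1 (sphericalCoords r) := by
  refine (contDiff_piLp 2).2 fun m => ?_
  fin_cases m <;>
    simp only [sphericalCoords, Fin.isValue, Fin.zero_eta, Fin.mk_one, Fin.reduceFinMk,
      PiLp.smul_apply, Matrix.cons_val_zero, Matrix.cons_val_one, Matrix.cons_val, smul_eq_mul] <;>
    fun_prop

theorem sphere_subset_image_sphericalCoords {r : ℝ} (hr : 0 < r) :
    sphere (0 : EuclideanSpace ℝ (Fin 3)) r ⊆ sphericalCoords r '' Icc (-π) π ×ˢ Icc 0 π := by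
  intro x hx
  have hsq : x 0 ^ 2 + x 1 ^ 2 + x 2 ^ 2 = r ^ 2 := by
    rw [mem_sphere_zero_iff_norm] at hx
    rw [← hx, EuclideanSpace.real_norm_sq_eq, Fin.sum_univ_three]
  have hx2 : -1 ≤ x 2 / r ∧ x 2 / r ≤ 1 := by
    rw [le_div_iff₀ hr, div_le_iff₀ hr]
    constructor <;> nlinarith [sq_nonneg (x 0), sq_nonneg (x 1)]
  set z : ℂ := ⟨x 0, x 1⟩
  have hz : r * sin (arccos (x 2 / r)) = ‖z‖ := by
    have h : 1 - (x 2 / r) ^ 2 = (x 0 * x 0 + x 1 * x 1) / r ^ 2 := by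
      field_simp
      linarith
    rw [sin_arccos, h, sqrt_div' _ (sq_nonneg r), sqrt_sq hr.le, Complex.norm_def,
      Complex.normSq_mk]
    field_simp
  refine ⟨(z.arg, arccos (x 2 / r)), ⟨⟨(Complex.neg_pi_lt_arg z).le, Complex.arg_le_pi z⟩,
    ⟨arccos_nonneg _, arccos_le_pi _⟩⟩, ?_⟩
  ext m
  fin_cases m
  all_goals simp only [sphericalCoords, Fin.isValue, Fin.zero_eta, Fin.mk_one, Fin.reduceFinMk,
    PiLp.smul_apply, Matrix.cons_val_zero, Matrix.cons_val_one, Matrix.cons_val, smul_eq_mul]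
  · rw [mul_left_comm, hz, mul_comm]
    exact Complex.norm_mul_cos_arg z
  · rw [mul_left_comm, hz, mul_comm]
    exact Complex.norm_mul_sin_arg z
  · rw [cos_arccos hx2.1 hx2.2]
    field_simp

theorem hausdorffMeasure_sphere_lt_top {r : ℝ} (hr : 0 < r) :
    μH[2] (sphere (0 : EuclideanSpace ℝ (Fin 3)) r) < ⊤ := by
  refine (measure_mono (sphere_subset_image_sphericalCoords hr)).trans_lt ?_
  simpa using (contDiff_sphericalCoords r).hausdorffMeasure_image_lt_top
    (isCompact_Icc.prod isCompact_Icc)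

end SphereMeasure

/-- The surface integral over the sphere of radius `s` of any Poisson bracket vanishes. -/
theorem integral_pb_eq_zero (s : ℝ) (hs : 0 < s) (f g : MvPolynomial (Fin 3) ℝ) :
    ∫ x in Metric.sphere (0 : EuclideanSpace ℝ (Fin 3)) s,
      MvPolynomial.eval (fun i => x i) (pb f g) ∂(μH[2]) = 0 := by
  have hS := hausdorffMeasure_sphere_lt_top hs
  have hintegrable := integrableOn_sphere_eval hS
  simp only [pb_eq_sum_angularDerivation, map_add]
  rw [integral_add ((hintegrable _).fun_add (hintegrable _)) (hintegrable _),
    integral_add (hintegrable _) (hintegrable _),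
    setIntegral_sphere_eval_angularDerivation hS (by decide),
    setIntegral_sphere_eval_angularDerivation hS (by decide),
    setIntegral_sphere_eval_angularDerivation hS (by decide), add_zero, add_zero]
end
end

section
/- Quantum counterpart of the identity s²S₃ = {S₁²−S₂², S₁S₂} − {S₂S₃, S₃S₁}: under the stated hypotheses, −i·[Q₁² − Q₂², (1/2)(Q₁Q₂ + Q₂Q₁)] + i·[(1/2)(Q₂Q₃ + Q₃Q₂), (1/2)(Q₃Q₁ + Q₁Q₃)] = (λ − 3/4)·Q₃, where [x,y] = xy − yx. -/
open MvPolynomial MeasureTheory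

noncomputable section

attribute [local instance] Classical.propDecidable

/-- Quantum counterpart of the identity `s²S₃ = {S₁² - S₂², S₁S₂} - {S₂S₃, S₃S₁}`:
for elements `Q₁, Q₂, Q₃` of a unital associative ℂ-algebra satisfying the su(2)
commutation relations and `Q₁² + Q₂² + Q₃² = λ·1`, one has
`-i [Q₁² - Q₂², ½(Q₁Q₂ + Q₂Q₁)] + i [½(Q₂Q₃ + Q₃Q₂), ½(Q₃Q₁ + Q₁Q₃)] = (λ - 3/4) Q₃`. -/
theorem quantum_bracket_identity (A : Type) [Ring A] [Algebra ℂ A]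
    (Q₁ Q₂ Q₃ : A)
    (h12 : Q₁ * Q₂ - Q₂ * Q₁ = Complex.I • Q₃)
    (h23 : Q₂ * Q₃ - Q₃ * Q₂ = Complex.I • Q₁)
    (h31 : Q₃ * Q₁ - Q₁ * Q₃ = Complex.I • Q₂)
    (lam : ℂ) (hcas : Q₁ ^ 2 + Q₂ ^ 2 + Q₃ ^ 2 = lam • (1 : A)) :
    -Complex.I • ((Q₁ ^ 2 - Q₂ ^ 2) * ((1 / 2 : ℂ) • (Q₁ * Q₂ + Q₂ * Q₁))
        - ((1 / 2 : ℂ) • (Q₁ * Q₂ + Q₂ * Q₁)) * (Q₁ ^ 2 - Q₂ ^ 2))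
      + Complex.I • (((1 / 2 : ℂ) • (Q₂ * Q₃ + Q₃ * Q₂)) * ((1 / 2 : ℂ) • (Q₃ * Q₁ + Q₁ * Q₃))
        - ((1 / 2 : ℂ) • (Q₃ * Q₁ + Q₁ * Q₃)) * ((1 / 2 : ℂ) • (Q₂ * Q₃ + Q₃ * Q₂)))
      = (lam - 3 / 4) • Q₃ := by
  have e21 : Q₂ * Q₁ = Q₁ * Q₂ - Complex.I • Q₃ := by rw [← h12]; abel
  have e31 : Q₃ * Q₁ = Q₁ * Q₃ + Complex.I • Q₂ := by rw [← h31]; abel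
  have e32 : Q₃ * Q₂ = Q₂ * Q₃ - Complex.I • Q₁ := by rw [← h23]; abel
  have e21' : ∀ x : A, Q₂ * (Q₁ * x) = Q₁ * (Q₂ * x) - Complex.I • (Q₃ * x) := by
    intro x; rw [← mul_assoc, e21, sub_mul, smul_mul_assoc, mul_assoc]
  have e31' : ∀ x : A, Q₃ * (Q₁ * x) = Q₁ * (Q₃ * x) + Complex.I • (Q₂ * x) := by
    intro x; rw [← mul_assoc, e31, add_mul, smul_mul_assoc, mul_assoc]
  have e32' : ∀ x : A, Q₃ * (Q₂ * x) = Q₂ * (Q₃ * x) - Complex.I • (Q₁ * x) := by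
    intro x; rw [← mul_assoc, e32, sub_mul, smul_mul_assoc, mul_assoc]
  have hl : lam • Q₃ = Q₁ * (Q₁ * Q₃) + Q₂ * (Q₂ * Q₃) + Q₃ * (Q₃ * Q₃) := by
    rw [← mul_assoc, ← mul_assoc, ← mul_assoc, ← pow_two, ← pow_two, ← pow_two,
      ← add_mul, ← add_mul, hcas, smul_mul_assoc, one_mul]
  rw [sub_smul, hl]
  simp only [pow_two, mul_add, add_mul, mul_sub, sub_mul, smul_mul_assoc, mul_smul_comm,
    smul_smul, smul_add, smul_sub, smul_neg, mul_neg, neg_mul, neg_neg,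
    mul_assoc, e21, e31, e32, e21', e31', e32']
  match_scalars <;> (try ring_nf) <;> (try simp [Complex.I_sq])

end
end
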